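/- arXiv:1212.6789 — 2 statements merged into one kernel-verified Lean document; each statement's English description precedes it below -/
import Mathlib

section
/- Let λ be an n-partition, π an n-permutation, and T a semistandard tableau of shape λ. Then S(T) = Y_λ(π) if and only if T(l,k) ∈ C_λ(T,π;l,k) for every box (l,k) of λ. -/
/-
Common combinatorial set-up for "Tableaux for Key Polynomials, Demazure
Characters, and Atoms" (Proctor–Willis).

Conventions: a box `(j, i)` means column `j`, row `i`, both 1-indexed.
Partial (remnant) tableaux are encoded by their column-length functions
`c : ℕ → ℕ` (each column of a remnant is a top segment of the original
column), together with the ambient value function `T : ℕ → ℕ → ℕ`.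
-/

open scoped BigOperators Classical

noncomputable section

namespace KeyPoly

open MvPolynomial

/-- An `n`-partition `λ = (λ_1, …, λ_n)` with `λ_1 ≥ … ≥ λ_n ≥ 0`,
recorded as a function on `1, …, n`, vanishing beyond `n`. -/
structure NPartition (n : ℕ) where
  part : ℕ → ℕ
  antitone : ∀ ⦃i j : ℕ⦄, 1 ≤ i → i ≤ j → part j ≤ part i
  outside : ∀ i : ℕ, n < i → part i = 0

variable {n : ℕ}

/-- The column length `ζ_j` of the Young diagram of `λ`. -/
def zeta (lam : NPartition n) (j : ℕ) : ℕ :=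
  ((Finset.Icc 1 n).filter fun i => j ≤ lam.part i).card

/-- The box `(j,i)` (column `j`, row `i`) belongs to the diagram of `λ`. -/
def InShape (lam : NPartition n) (j i : ℕ) : Prop :=
  1 ≤ j ∧ 1 ≤ i ∧ i ≤ n ∧ j ≤ lam.part i

/-- The boxes of the diagram of `λ`, as a finite set of pairs (column, row). -/
def boxes (lam : NPartition n) : Finset (ℕ × ℕ) :=
  (Finset.Icc 1 (lam.part 1) ×ˢ Finset.Icc 1 n).filter fun b => b.1 ≤ lam.part b.2

/-- `T` is a semistandard tableau of shape `λ` with values in `[1,n]`: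
rows weakly increase eastward, columns strictly increase southward. -/
def IsSSYT (lam : NPartition n) (T : ℕ → ℕ → ℕ) : Prop :=
  (∀ j i, InShape lam j i → 1 ≤ T j i ∧ T j i ≤ n) ∧
  (∀ j i, InShape lam (j + 1) i → T j i ≤ T (j + 1) i) ∧
  (∀ j i, InShape lam j (i + 1) → T j i < T j (i + 1))

/-- Normalization: the filling vanishes outside the shape. -/
def ZeroOutside (lam : NPartition n) (T : ℕ → ℕ → ℕ) : Prop :=
  ∀ j i, ¬ InShape lam j i → T j i = 0

/-- `T(l, k+1)`, with the boundary convention `n+1` when `k = ζ_l`. -/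
def south (lam : NPartition n) (T : ℕ → ℕ → ℕ) (l k : ℕ) : ℕ :=
  if InShape lam l (k + 1) then T l (k + 1) else n + 1

/-- `T(l+1, k)`, with the boundary convention `n` when `l = λ_k`. -/
def east (lam : NPartition n) (T : ℕ → ℕ → ℕ) (l k : ℕ) : ℕ :=
  if InShape lam (l + 1) k then T (l + 1) k else n

/-- An `n`-permutation: a tuple `(p 1, …, p n)` of distinct entries from `[1,n]`. -/
def IsNPerm (n : ℕ) (p : ℕ → ℕ) : Prop :=
  Set.BijOn p (Set.Icc 1 n) (Set.Icc 1 n)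

/-- The `λ`-key `Y_λ(π)`: column `j` is `π_1, …, π_{ζ_j}` sorted increasingly
(from top to bottom); zero outside the shape. -/
def keyTab (lam : NPartition n) (p : ℕ → ℕ) (j i : ℕ) : ℕ :=
  if InShape lam j i then
    (((Finset.Icc 1 (zeta lam j)).image p).sort (· ≤ ·)).getD (i - 1) 0
  else 0

/-- A semistandard `T` is a key if the values of each column contain the
values of every column to its east. -/
def colSet (lam : NPartition n) (T : ℕ → ℕ → ℕ) (j : ℕ) : Finset ℕ :=
  (Finset.Icc 1 (zeta lam j)).image (T j)

def IsKey (lam : NPartition n) (T : ℕ → ℕ → ℕ) : Prop :=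
  ∀ j j' : ℕ, 1 ≤ j → j ≤ j' → j' ≤ lam.part 1 → colSet lam T j' ⊆ colSet lam T j

/-! ### The (right) scanning method -/

/-- The next column of the scanning path: the earliest column `h' > h`
(up to `maxCol`) whose column bottom in the remnant `c` is nonempty and has
value weakly larger than the bottom value of column `h`. -/
def nextCol (T : ℕ → ℕ → ℕ) (c : ℕ → ℕ) (maxCol h : ℕ) : Option ℕ :=
  (List.range' (h + 1) (maxCol - h)).find?
    (fun h' => decide (0 < c h' ∧ T h (c h) ≤ T h' (c h')))

/-- Columns of the scanning path (EWIS of column bottoms) starting at column `h`,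
with explicit fuel. -/
def pathColsAux (T : ℕ → ℕ → ℕ) (c : ℕ → ℕ) (maxCol : ℕ) : ℕ → ℕ → List ℕ
  | 0, h => [h]
  | fuel + 1, h =>
    match nextCol T c maxCol h with
    | none => [h]
    | some h' => h :: pathColsAux T c maxCol fuel h'

/-- Columns of the scanning path starting at the bottom of column `j` of the
remnant with column lengths `c`. -/
def pathCols (T : ℕ → ℕ → ℕ) (c : ℕ → ℕ) (maxCol j : ℕ) : List ℕ :=
  pathColsAux T c maxCol maxCol j

/-- Remove the scanning path starting in column `j` from the remnant `c`. -/
def removePath (T : ℕ → ℕ → ℕ) (c : ℕ → ℕ) (maxCol j : ℕ) : ℕ → ℕ :=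
  fun h => if h ∈ pathCols T c maxCol j then c h - 1 else c h

/-- Iterate path removal `r` times, always starting from column `j`. -/
def remnantIter (T : ℕ → ℕ → ℕ) (c0 : ℕ → ℕ) (maxCol j : ℕ) : ℕ → ℕ → ℕ
  | 0 => c0
  | r + 1 => removePath T (remnantIter T c0 maxCol j r) maxCol j

/-- Column lengths of the remnant tableau `T^{(j;i)}`. -/
def remnant (lam : NPartition n) (T : ℕ → ℕ → ℕ) (j i : ℕ) : ℕ → ℕ :=
  remnantIter T (zeta lam) (lam.part 1) j (zeta lam j - i)

/-- The scanning path `P(T; j, i)`, recorded by its list of columns. -/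
def scanPath (lam : NPartition n) (T : ℕ → ℕ → ℕ) (j i : ℕ) : List ℕ :=
  pathCols T (remnant lam T j i) (lam.part 1) j

/-- The scanning value `S(T; j, i)`: the last value of the EWIS from `(j,i)`. -/
def scanValue (lam : NPartition n) (T : ℕ → ℕ → ℕ) (j i : ℕ) : ℕ :=
  T ((scanPath lam T j i).getLastD j)
    (remnant lam T j i ((scanPath lam T j i).getLastD j))

/-- The box `(l,k)` lies on the scanning path `P(T; j, i)`. -/
def InScanPath (lam : NPartition n) (T : ℕ → ℕ → ℕ) (j i l k : ℕ) : Prop :=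
  l ∈ scanPath lam T j i ∧ k = remnant lam T j i l

/-- `m(U)` where `U` is the remnant with column lengths `c` restricted to the
columns `l+1, …, maxCol`:  the maximum of the column-bottom values, with the
convention `m((())) = 1` for the empty tableau. -/
def mEast (T : ℕ → ℕ → ℕ) (c : ℕ → ℕ) (maxCol l : ℕ) : ℕ :=
  max 1 (((Finset.Icc (l + 1) maxCol).filter fun h => 0 < c h).sup fun h => T h (c h))

/-! ### The condition sets A, C, and B -/

/-- The set `A_λ(T, π; l, k)`. -/
def Aset (lam : NPartition n) (T : ℕ → ℕ → ℕ) (p : ℕ → ℕ) (l k : ℕ) : Set ℕ :=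
  if keyTab lam p l k < mEast T (remnant lam T l k) (lam.part 1) l then (∅ : Set ℕ)
  else Set.Icc k (min (keyTab lam p l k) (min (south lam T l k - 1) (east lam T l k)))

/-- The set `C_λ(T, π; l, k)`. -/
def Cset (lam : NPartition n) (T : ℕ → ℕ → ℕ) (p : ℕ → ℕ) (l k : ℕ) : Set ℕ :=
  if l = lam.part 1 then {keyTab lam p l k}
  else if keyTab lam p l k < mEast T (remnant lam T l k) (lam.part 1) l then (∅ : Set ℕ)
  else if mEast T (remnant lam T l k) (lam.part 1) l = keyTab lam p l k then
    Set.Icc k (min (keyTab lam p l k) (min (south lam T l k - 1) (east lam T l k)))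
  else {keyTab lam p l k} ∩ Set.Icc k (min (south lam T l k - 1) (east lam T l k))

/-- The row index `a(l,k;j)`:  the `i` with `(l-1,k) ∈ P(T;j,i)`
(convention `a(l,k;l) = k`). -/
def aIdx (lam : NPartition n) (T : ℕ → ℕ → ℕ) (l k j : ℕ) : ℕ :=
  if j = l then k
  else ((Finset.Icc 1 (zeta lam j)).filter fun i => InScanPath lam T j i (l - 1) k).sup id

/-- The row index `b(l,k;j)`:  the `i` with `(l,k+1) ∈ P(T;j,i)` when `k < ζ_l`,
and `ζ_j + 1` when `k = ζ_l` (convention `b(l,k;l) = k+1`). -/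
def bIdx (lam : NPartition n) (T : ℕ → ℕ → ℕ) (l k j : ℕ) : ℕ :=
  if j = l then k + 1
  else if k = zeta lam l then zeta lam j + 1
  else ((Finset.Icc 1 (zeta lam j)).filter fun i => InScanPath lam T j i l (k + 1)).sup id

/-- `E(l,k;j,i)`:  the value of `T` at the box `(h,m)` of `P(T;j,i)` with `h < l`
maximal (convention `E(l,k;l,k) = k`). -/
def Epath (lam : NPartition n) (T : ℕ → ℕ → ℕ) (l k j i : ℕ) : ℕ :=
  if j = l then k
  else
    T (((scanPath lam T j i).filter fun h => decide (h < l)).foldr max 0)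
      (remnant lam T j i (((scanPath lam T j i).filter fun h => decide (h < l)).foldr max 0))

/-- The set `B_λ(T, π; l, k) = ⋂_{j=1}^{l} ⋃_{i=a(j)}^{b(j)-1} [E(l,k;j,i), Y_λ(π)(j,i)]`. -/
def Bset (lam : NPartition n) (T : ℕ → ℕ → ℕ) (p : ℕ → ℕ) (l k : ℕ) : Set ℕ :=
  {v | ∀ j, 1 ≤ j → j ≤ l →
    ∃ i, aIdx lam T l k j ≤ i ∧ i + 1 ≤ bIdx lam T l k j ∧
      Epath lam T l k j i ≤ v ∧ v ≤ keyTab lam p j i}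

/-! ### The left scanning method -/

/-- The largest row `r ≤ c j` of column `j` whose value is at most `x`. -/
def maxRow (T : ℕ → ℕ → ℕ) (c : ℕ → ℕ) (j x : ℕ) : ℕ :=
  ((Finset.Icc 1 (c j)).filter fun r => T j r ≤ x).sup id

/-- The rows of the maximizing weakly decreasing sequence through columns
`j, j-1, …, 1` with initial bound `x`, in a remnant with column lengths `c`. -/
def leftRows (T : ℕ → ℕ → ℕ) (c : ℕ → ℕ) : ℕ → ℕ → List ℕ
  | 0, _ => []
  | j + 1, x => maxRow T c (j + 1) x :: leftRows T c j (T (j + 1) (maxRow T c (j + 1) x))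

/-- The column-1 value at the end of the left scanning path originating at `(j, r)`. -/
def leftEndVal (T : ℕ → ℕ → ℕ) (c : ℕ → ℕ) (j r : ℕ) : ℕ :=
  T 1 ((leftRows T c j (T j r)).getLastD 0)

/-- Remove the left scanning path originating at `(l, c l)`, together with
all values beneath it, from the remnant `c`. -/
def leftRemovePath (T : ℕ → ℕ → ℕ) (c : ℕ → ℕ) (l : ℕ) : ℕ → ℕ :=
  fun j =>
    if 1 ≤ j ∧ j ≤ l then (leftRows T c l (T l (c l))).getD (l - j) 0 - 1 else c j

/-- Iterate left-path removal `r` times (always for column `l`). -/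
def leftRemnantIter (T : ℕ → ℕ → ℕ) (c0 : ℕ → ℕ) (l : ℕ) : ℕ → ℕ → ℕ
  | 0 => c0
  | r + 1 => leftRemovePath T (leftRemnantIter T c0 l r) l

/-- Column lengths of the left remnant used to compute `M(T; l, i)`:
`T` restricted to its first `l` columns with the left scanning paths
originating at `(l, ζ_l), …, (l, i+1)` (and everything beneath them) removed. -/
def leftRemnant (lam : NPartition n) (T : ℕ → ℕ → ℕ) (l i : ℕ) : ℕ → ℕ :=
  leftRemnantIter T (zeta lam) l (zeta lam l - i)

/-- The left scanning value `M(T; l, i)`. -/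
def leftScanValue (lam : NPartition n) (T : ℕ → ℕ → ℕ) (l i : ℕ) : ℕ :=
  leftEndVal T (leftRemnant lam T l i) l i

/-! ### The condition sets F and G -/

/-- The set `F_λ(T, σ; l, k)`. -/
def Fset (lam : NPartition n) (T : ℕ → ℕ → ℕ) (sg : ℕ → ℕ) (l k : ℕ) : Set ℕ :=
  if l = 1 then Set.Icc (keyTab lam sg 1 k) (south lam T 1 k - 1)
  else
    let U := leftRemnant lam T l k
    let q := maxRow T U (l - 1) (south lam T l k - 1)
    let P := (Finset.Icc 1 q).filter fun h => keyTab lam sg l k ≤ leftEndVal T U (l - 1) h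
    if hP : P.Nonempty then Set.Icc (T (l - 1) (P.min' hP)) (south lam T l k - 1)
    else (∅ : Set ℕ)

/-- The set `G_λ(T, σ; l, k)`. -/
def Gset (lam : NPartition n) (T : ℕ → ℕ → ℕ) (sg : ℕ → ℕ) (l k : ℕ) : Set ℕ :=
  if l = 1 then {keyTab lam sg 1 k}
  else
    let U := leftRemnant lam T l k
    let q := maxRow T U (l - 1) (south lam T l k - 1)
    let P := (Finset.Icc 1 q).filter fun h => leftEndVal T U (l - 1) h = keyTab lam sg l k
    if hP : P.Nonempty then
      Set.Icc (T (l - 1) (P.min' hP))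
        (min ((if P.max' hP + 1 ≤ U (l - 1) then T (l - 1) (P.max' hP + 1) else n + 1) - 1)
          (south lam T l k - 1))
    else (∅ : Set ℕ)

/-! ### Polynomials, divided differences, words -/

/-- Polynomials in the variables `X 1, …, X n` (indexed by `ℕ`) over `ℚ`. -/
abbrev Poly : Type := MvPolynomial ℕ ℚ

/-- The action of `s_i` on polynomials: interchange `x_i` and `x_{i+1}`. -/
def sOp (i : ℕ) (P : Poly) : Poly := rename (Equiv.swap i (i + 1)) P

/-- The divided difference operator
`ρ_i = (x_i - x_{i+1})⁻¹ ∘ (1 - s_i) ∘ x_i`, defined as the unique polynomial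
`Q` with `(x_i - x_{i+1}) Q = x_i P - s_i (x_i P)`. -/
def rhoOp (i : ℕ) (P : Poly) : Poly :=
  if h : ∃ Q : Poly, (X i - X (i + 1)) * Q = X i * P - sOp i (X i * P) then h.choose
  else 0

/-- The operator `ρ̄_i := ρ_i - 1`. -/
def rhoBarOp (i : ℕ) (P : Poly) : Poly := rhoOp i P - P

/-- Apply operators indexed by a word `[i_t, …, i_1]`, rightmost first:
`applyOps f [i_t, …, i_1] P = f i_t (⋯ (f i_1 P))`. -/
def applyOps (f : ℕ → Poly → Poly) : List ℕ → Poly → Poly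
  | [], P => P
  | i :: w, P => f i (applyOps f w P)

/-- The monomial `x_1^{λ_1} ⋯ x_n^{λ_n}`. -/
def lamMonomial (lam : NPartition n) : Poly :=
  ∏ i ∈ Finset.Icc 1 n, X i ^ lam.part i

/-- The weight monomial `x^T = ∏ x_i^{c_i}` of the filling `T`. -/
def weight (lam : NPartition n) (T : ℕ → ℕ → ℕ) : Poly :=
  ∏ b ∈ boxes lam, X (T b.1 b.2)

/-- The simple reflection `s_i` acting by value. -/
def swapVal (i v : ℕ) : ℕ := if v = i then i + 1 else if v = i + 1 then i else v

/-- The permutation `s_{i_t} ⋯ s_{i_1}.(1, 2, …, n)` obtained by applying the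
word `w = [i_t, …, i_1]` (rightmost letter first, each acting by value) to the
identity. -/
def permOfWord (w : List ℕ) : ℕ → ℕ := w.foldr (fun i f => swapVal i ∘ f) id

/-- `w` is a word in letters `s_1, …, s_{n-1}` producing `π` from `(1, …, n)`. -/
def WordFor (n : ℕ) (w : List ℕ) (p : ℕ → ℕ) : Prop :=
  (∀ i ∈ w, 1 ≤ i ∧ i + 1 ≤ n) ∧ ∀ t, 1 ≤ t → t ≤ n → permOfWord w t = p t

/-- `w` is a reduced word for `π`: it produces `π` with minimal length. -/
def IsReducedWord (n : ℕ) (w : List ℕ) (p : ℕ → ℕ) : Prop :=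
  WordFor n w p ∧ ∀ w' : List ℕ, WordFor n w' p → w.length ≤ w'.length

/-- The atom `c_λ(π;x) = ρ̄_{i_t} ⋯ ρ̄_{i_1} . x_1^{λ_1} ⋯ x_n^{λ_n}`, computed
from a choice of reduced word for `π` (it is independent of this choice). -/
def atomPoly (lam : NPartition n) (p : ℕ → ℕ) : Poly :=
  if h : ∃ w : List ℕ, IsReducedWord n w p then
    applyOps rhoBarOp h.choose (lamMonomial lam)
  else 0

/-! ### `S_n^λ` -/

/-- The set `Q_λ` of distinct column lengths of `λ`. -/
def Qset (lam : NPartition n) : Finset ℕ := (Finset.Icc 1 (lam.part 1)).image (zeta lam)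

/-- `π ∈ S_n^λ`: an `n`-permutation increasing on each block `[q_{r-1}+1, q_r]`
cut out by the column lengths of `λ` (equivalently, `π_i < π_j` whenever
`i < j` and no element of `Q_λ` lies in `[i, j)`). -/
def InSnLam (lam : NPartition n) (p : ℕ → ℕ) : Prop :=
  IsNPerm n p ∧ ∀ i j, 1 ≤ i → i < j → j ≤ n →
    (∀ q ∈ Qset lam, q < i ∨ j ≤ q) → p i < p j

end KeyPoly

/-!
A scanning path is the earliest weakly increasing subsequence of the column bottoms of the
remnant, so it ends at the largest of them: `S(T;l,k) = max (T(l,k), m(U))`. The equation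
`S(T;l,k) = Y_λ(π)(l,k)` is therefore a condition on the single box `(l,k)`, and the three cases
of `C_λ` are the cases `m(U) >, =, < Y_λ(π)(l,k)`; the remaining bounds
`k ≤ T(l,k) ≤ min (T(l,k+1) - 1, T(l+1,k))` hold in every semistandard tableau.
-/

namespace KeyPoly

section Scanning

variable (T : ℕ → ℕ → ℕ) (c : ℕ → ℕ) (maxCol : ℕ)

def eastBottomSup (l : ℕ) : ℕ :=
  ((Finset.Icc (l + 1) maxCol).filter fun h => 0 < c h).sup fun h => T h (c h)

theorem mEast_eq_max_one_eastBottomSup (l : ℕ) :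
    mEast T c maxCol l = max 1 (eastBottomSup T c maxCol l) := rfl

theorem eastBottomSup_eq_zero {l : ℕ} (hl : maxCol ≤ l) : eastBottomSup T c maxCol l = 0 := by
  simp [eastBottomSup, Finset.Icc_eq_empty (show ¬ l + 1 ≤ maxCol by omega)]

variable {T c maxCol}

theorem le_eastBottomSup {l h : ℕ} (hlh : l < h) (hh : h ≤ maxCol) (hc : 0 < c h) :
    T h (c h) ≤ eastBottomSup T c maxCol l :=
  Finset.le_sup (f := fun h => T h (c h))
    (Finset.mem_filter.2 ⟨Finset.mem_Icc.2 ⟨hlh, hh⟩, hc⟩)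

theorem eastBottomSup_le_of_nextCol_eq_none {j : ℕ} (h : nextCol T c maxCol j = none) :
    eastBottomSup T c maxCol j ≤ T j (c j) := by
  refine Finset.sup_le fun x hx => ?_
  simp only [Finset.mem_filter, Finset.mem_Icc] at hx
  have := List.find?_eq_none.1 h x (List.mem_range'_1.2 ⟨hx.1.1, by omega⟩)
  simp only [decide_eq_true_eq, not_and, not_le] at this
  exact (this hx.2).le

/-- Every column skipped by the scanning path has a bottom value below the current one, so the
sup of the east column bottoms is reached through the next column of the path. -/
theorem eastBottomSup_eq_of_nextCol_eq_some {j h' : ℕ} (h : nextCol T c maxCol j = some h') :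
    T j (c j) ≤ T h' (c h') ∧
      eastBottomSup T c maxCol j = max (T h' (c h')) (eastBottomSup T c maxCol h') := by
  obtain ⟨hp, hmem, hskip⟩ := List.find?_range'_eq_some.1 h
  simp only [decide_eq_true_eq] at hp
  rw [List.mem_range'_1] at hmem
  refine ⟨hp.2, le_antisymm (Finset.sup_le fun x hx => ?_)
    (max_le ?_ (Finset.sup_le fun x hx => ?_))⟩
  · simp only [Finset.mem_filter, Finset.mem_Icc] at hx
    rcases lt_trichotomy x h' with hx' | rfl | hx'
    · have := hskip x hx.1.1 hx'
      simp only [Bool.not_eq_eq_eq_not, Bool.not_true, decide_eq_false_iff_not,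
        not_and, not_le] at this
      exact le_max_of_le_left ((this hx.2).le.trans hp.2)
    · exact le_max_left _ _
    · exact le_max_of_le_right (le_eastBottomSup hx' hx.1.2 hx.2)
  · exact le_eastBottomSup (by omega) (by omega) hp.1
  · simp only [Finset.mem_filter, Finset.mem_Icc] at hx
    exact le_eastBottomSup (by omega) hx.1.2 hx.2

theorem pathColsAux_getLastD_value (fuel j d : ℕ) (hfuel : maxCol - j ≤ fuel) :
    T ((pathColsAux T c maxCol fuel j).getLastD d) (c ((pathColsAux T c maxCol fuel j).getLastD d))
      = max (T j (c j)) (eastBottomSup T c maxCol j) := by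
  induction fuel generalizing j d with
  | zero => simp [pathColsAux, eastBottomSup_eq_zero T c maxCol (show maxCol ≤ j by omega)]
  | succ fuel ih =>
    rcases hnext : nextCol T c maxCol j with _ | h'
    · simp [pathColsAux, hnext, eastBottomSup_le_of_nextCol_eq_none hnext]
    · obtain ⟨hle, hsup⟩ := eastBottomSup_eq_of_nextCol_eq_some hnext
      have hjh' := (List.mem_range'_1.1 (List.find?_range'_eq_some.1 hnext).2.1).1
      simp only [pathColsAux, hnext, List.getLastD_cons]
      rw [ih h' j (by omega), ← hsup, max_eq_right (hle.trans (hsup ▸ le_max_left _ _))]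

theorem mem_pathColsAux_self (fuel j : ℕ) : j ∈ pathColsAux T c maxCol fuel j := by
  cases fuel with
  | zero => simp [pathColsAux]
  | succ fuel => rcases hnext : nextCol T c maxCol j with _ | h' <;> simp [pathColsAux, hnext]

theorem remnantIter_apply_self (c0 : ℕ → ℕ) (j r : ℕ) :
    remnantIter T c0 maxCol j r j = c0 j - r := by
  induction r with
  | zero => rfl
  | succ r ih =>
    simp only [remnantIter, removePath, pathCols, if_pos (mem_pathColsAux_self _ _), ih]
    omega

end Scanning

variable {n : ℕ} {lam : NPartition n} {T : ℕ → ℕ → ℕ} {l k : ℕ}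

theorem InShape.le_zeta (h : InShape lam l k) : k ≤ zeta lam l := by
  obtain ⟨-, -, hkn, hlk⟩ := h
  have hsub : Finset.Icc 1 k ⊆ (Finset.Icc 1 n).filter fun i => l ≤ lam.part i := fun i hi => by
    rw [Finset.mem_Icc] at hi
    simp only [Finset.mem_filter, Finset.mem_Icc]
    exact ⟨⟨hi.1, hi.2.trans hkn⟩, hlk.trans (lam.antitone hi.1 hi.2)⟩
  simpa [zeta] using Finset.card_le_card hsub

theorem InShape.of_succ_row (h : InShape lam l (k + 1)) (hk : 1 ≤ k) : InShape lam l k :=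
  ⟨h.1, hk, by have := h.2.2.1; omega, h.2.2.2.trans (lam.antitone hk (by omega))⟩

theorem remnant_apply_self (h : InShape lam l k) : remnant lam T l k l = k := by
  rw [remnant, remnantIter_apply_self]
  have := h.le_zeta
  omega

theorem scanValue_eq_max (h : InShape lam l k) :
    scanValue lam T l k = max (T l k) (eastBottomSup T (remnant lam T l k) (lam.part 1) l) := by
  have hlast := pathColsAux_getLastD_value (T := T) (c := remnant lam T l k) _ l l
    (Nat.sub_le (lam.part 1) l)
  rwa [remnant_apply_self h] at hlast

namespace IsSSYT

variable (hT : IsSSYT lam T)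
include hT

theorem row_le_val (h : InShape lam l k) : k ≤ T l k := by
  induction k with
  | zero => omega
  | succ k ih =>
    rcases Nat.eq_zero_or_pos k with rfl | hk
    · exact (hT.1 l 1 h).1
    · have := hT.2.2 l k h
      have := ih (h.of_succ_row hk)
      omega

theorem val_le_south_sub_one (h : InShape lam l k) : T l k ≤ south lam T l k - 1 := by
  unfold south
  split_ifs with hs
  · have := hT.2.2 l k hs; omega
  · have := (hT.1 l k h).2; omega

theorem val_le_east (h : InShape lam l k) : T l k ≤ east lam T l k := by
  unfold east
  split_ifs with he
  · exact hT.2.1 l k he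
  · exact (hT.1 l k h).2

theorem scanValue_eq_max_mEast (h : InShape lam l k) :
    scanValue lam T l k = max (T l k) (mEast T (remnant lam T l k) (lam.part 1) l) := by
  rw [scanValue_eq_max h, mEast_eq_max_one_eastBottomSup, ← max_assoc,
    max_eq_left (hT.1 l k h).1]

theorem scanValue_eq_keyTab_iff_mem_Cset (p : ℕ → ℕ) (h : InShape lam l k) :
    scanValue lam T l k = keyTab lam p l k ↔ T l k ∈ Cset lam T p l k := by
  have h1 := (hT.1 l k h).1
  have hk := hT.row_le_val h
  have hs := hT.val_le_south_sub_one h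
  have he := hT.val_le_east h
  have hm : 1 ≤ mEast T (remnant lam T l k) (lam.part 1) l := le_max_left _ _
  rw [hT.scanValue_eq_max_mEast h, Cset]
  split_ifs with hl hlt heq
  · rw [mEast_eq_max_one_eastBottomSup, eastBottomSup_eq_zero _ _ _ hl.ge]
    simp only [Set.mem_singleton_iff]
    omega
  all_goals simp only [Set.mem_empty_iff_false, Set.mem_inter_iff, Set.mem_singleton_iff,
    Set.mem_Icc, le_min_iff, max_def, iff_false]
  all_goals split_ifs <;> omega

end IsSSYT

theorem scan_eq_key_iff_Cset_general (n : ℕ) (lam : NPartition n)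
    (p : ℕ → ℕ) (T : ℕ → ℕ → ℕ) (hT : IsSSYT lam T) :
    (∀ j i, InShape lam j i → scanValue lam T j i = keyTab lam p j i) ↔
      (∀ l k, InShape lam l k → T l k ∈ Cset lam T p l k) :=
  forall₂_congr fun _ _ => imp_congr_right fun h => hT.scanValue_eq_keyTab_iff_mem_Cset p h

/-- Theorem 6.1.  `S(T) = Y_λ(π)` iff every entry of `T`
lies in the corresponding set `C_λ(T, π; l, k)`. -/
theorem scan_eq_key_iff_Cset (n : ℕ) (hn : 1 ≤ n) (lam : NPartition n)
    (p : ℕ → ℕ) (hp : IsNPerm n p) (T : ℕ → ℕ → ℕ) (hT : IsSSYT lam T) :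
    (∀ j i, InShape lam j i → scanValue lam T j i = keyTab lam p j i) ↔
      (∀ l k, InShape lam l k → T l k ∈ Cset lam T p l k) :=
  scan_eq_key_iff_Cset_general n lam p T hT

end KeyPoly
end
end

section
/- Let λ be an n-partition, π an n-permutation, and T a semistandard tableau of shape λ. Then S(T) ≤ Y_λ(π) (entrywise) if and only if T(l,k) ∈ B_λ(T,π;l,k) for every box (l,k) of λ. -/
/-
Common combinatorial set-up for "Tableaux for Key Polynomials, Demazure
Characters, and Atoms" (Proctor–Willis).

Conventions: a box `(j, i)` means column `j`, row `i`, both 1-indexed.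
Partial (remnant) tableaux are encoded by their column-length functions
`c : ℕ → ℕ` (each column of a remnant is a top segment of the original
column), together with the ambient value function `T : ℕ → ℕ → ℕ`.
-/

open scoped BigOperators Classical

noncomputable section

/-!
For a fixed column `j`, the paths `P(T;j,ζ_j), …, P(T;j,1)` remove the boxes of every column
`l ≥ j` bottom-up, one box per path, and each remnant stays a Young diagram in the columns `≥ j`.
So `(l,k)` lies on exactly one path `P(T;j,i)`, and column `l` has height `k` in `T^{(j;i')}`
exactly for `i ≤ i' < b(j)`.

Values weakly increase along a path, so `E(l,k;j,i) ≤ T(l,k) ≤ S(T;j,i)`, which with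
`S ≤ Y_λ(π)` puts `T(l,k)` in the `j`-th clause of `B`. Conversely, apply the `j`-th clause of `B`
at the last box `(L,m)` of `P(T;j,i)`, whose value is `S(T;j,i)`. A window index `i' > i` has
`E(L,m;j,i') > T(L,m)`, since otherwise the EWIS from column `j` would have reached column `L`;
hence `i' ≤ i` and `S(T;j,i) ≤ Y_λ(π)(j,i') ≤ Y_λ(π)(j,i)`.
-/

namespace List

lemma isGreatest_foldr_max_filter_lt {L : List ℕ} {l a : ℕ} (ha : a ∈ L) (hal : a < l) :
    IsGreatest {x | x ∈ L ∧ x < l} ((L.filter fun h => decide (h < l)).foldr max 0) := by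
  have haF : a ∈ L.filter fun h => decide (h < l) := mem_filter.2 ⟨ha, by simpa using hal⟩
  have hmem := maximum_mem (foldr_max_of_ne_nil (ne_nil_of_mem haF)).symm
  refine ⟨by simpa using hmem, fun x ⟨hx, hxl⟩ => ?_⟩
  exact le_max_of_le' 0 (mem_filter.2 ⟨hx, by simpa using hxl⟩) le_rfl

lemma Pairwise.rel_of_lt {L : List ℕ} {R : ℕ → ℕ → Prop}
    (hL : L.Pairwise fun a b => a < b ∧ R a b) {x y : ℕ} (hx : x ∈ L) (hy : y ∈ L)
    (hxy : x < y) : R x y := by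
  induction L with
  | nil => simp at hx
  | cons a L ih =>
    obtain ⟨ha, hL⟩ := pairwise_cons.1 hL
    rcases mem_cons.1 hx with rfl | hxL <;> rcases mem_cons.1 hy with rfl | hyL
    · omega
    · exact (ha y hyL).2
    · exact absurd (ha x hxL).1 (by omega)
    · exact ih hL hxL hyL

end List

namespace KeyPoly

variable {n : ℕ}

section Shape

variable (lam : NPartition n)

lemma zeta_antitone : Antitone (zeta lam) := fun _ _ h =>
  Finset.card_le_card fun _ hi => by
    rw [Finset.mem_filter] at hi ⊢
    exact ⟨hi.1, h.trans hi.2⟩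

lemma zeta_le (j : ℕ) : zeta lam j ≤ n :=
  (Finset.card_filter_le _ _).trans (by simp)

/-- Since `λ` is weakly decreasing, the rows counted by `ζ_l` are exactly `1, …, ζ_l`. -/
lemma inShape_iff {l k : ℕ} (hl : 1 ≤ l) (hk : 1 ≤ k) : InShape lam l k ↔ k ≤ zeta lam l := by
  constructor
  · rintro ⟨-, -, hkn, hlk⟩
    have hsub : Finset.Icc 1 k ⊆ (Finset.Icc 1 n).filter fun i => l ≤ lam.part i :=
      fun i hi => by
        rw [Finset.mem_Icc] at hi
        exact Finset.mem_filter.2 ⟨Finset.mem_Icc.2 ⟨hi.1, hi.2.trans hkn⟩,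
          hlk.trans (lam.antitone hi.1 hi.2)⟩
    simpa [zeta] using Finset.card_le_card hsub
  · intro hkz
    refine ⟨hl, hk, hkz.trans (zeta_le lam l), ?_⟩
    by_contra! hlk
    have hsub : ((Finset.Icc 1 n).filter fun i => l ≤ lam.part i) ⊆ Finset.Icc 1 (k - 1) :=
      fun i hi => by
        rw [Finset.mem_filter, Finset.mem_Icc] at hi
        rw [Finset.mem_Icc]
        by_contra! hik
        have := lam.antitone hk (show k ≤ i by omega)
        omega
    have := Finset.card_le_card hsub
    simp only [Nat.card_Icc] at this
    unfold zeta at hkz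
    omega

lemma le_part_one_of_inShape {l k : ℕ} (h : InShape lam l k) : l ≤ lam.part 1 :=
  h.2.2.2.trans (lam.antitone le_rfl h.2.1)

lemma row_le_of_isSSYT {T : ℕ → ℕ → ℕ} (hT : IsSSYT lam T) {l k : ℕ} (h : InShape lam l k) :
    k ≤ T l k := by
  induction k with
  | zero => exact absurd h.2.1 (by omega)
  | succ k ih =>
    rcases Nat.eq_zero_or_pos k with rfl | hk
    · exact (hT.1 l 1 h).1
    · exact (ih ⟨h.1, hk, by have := h.2.2.1; omega,
        h.2.2.2.trans (lam.antitone hk (by omega))⟩).trans_lt (hT.2.2 l k h)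

lemma length_sort_image_perm {p : ℕ → ℕ} (hp : IsNPerm n p) (j : ℕ) :
    (((Finset.Icc 1 (zeta lam j)).image p).sort (· ≤ ·)).length = zeta lam j := by
  rw [Finset.length_sort, Finset.card_image_of_injOn, Nat.card_Icc, Nat.add_sub_cancel]
  intro a ha b hb hab
  simp only [Finset.coe_Icc, Set.mem_Icc] at ha hb
  exact hp.injOn ⟨ha.1, ha.2.trans (zeta_le lam j)⟩ ⟨hb.1, hb.2.trans (zeta_le lam j)⟩ hab

lemma keyTab_mono {p : ℕ → ℕ} (hp : IsNPerm n p) {j i i' : ℕ} (hj : 1 ≤ j)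
    (hi' : 1 ≤ i') (hii' : i' ≤ i) (hi : i ≤ zeta lam j) :
    keyTab lam p j i' ≤ keyTab lam p j i := by
  rw [keyTab, keyTab, if_pos ((inShape_iff lam hj hi').2 (hii'.trans hi)),
    if_pos ((inShape_iff lam hj (hi'.trans hii')).2 hi)]
  set L := ((Finset.Icc 1 (zeta lam j)).image p).sort (· ≤ ·)
  have hlen : L.length = zeta lam j := length_sort_image_perm lam hp j
  have hi'L : i' - 1 < L.length := by omega
  have hiL : i - 1 < L.length := by omega
  rw [L.getD_eq_getElem 0 hi'L, L.getD_eq_getElem 0 hiL]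
  exact (Finset.pairwise_sort _ _).rel_get_of_le (a := ⟨i' - 1, hi'L⟩) (b := ⟨i - 1, hiL⟩)
    (Fin.mk_le_mk.2 (by omega))

end Shape

section ScanningPath

variable (T : ℕ → ℕ → ℕ) (c : ℕ → ℕ) (M : ℕ)

lemma nextCol_eq_some {h h' : ℕ} (hnc : nextCol T c M h = some h') :
    h < h' ∧ h' ≤ M ∧ 0 < c h' ∧ T h (c h) ≤ T h' (c h') ∧
      ∀ f, h < f → f < h' → ¬(0 < c f ∧ T h (c h) ≤ T f (c f)) := by
  simp only [nextCol, List.find?_range'_eq_some, List.mem_range'_1, decide_eq_true_eq,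
    Bool.not_eq_true', decide_eq_false_iff_not] at hnc
  exact ⟨by omega, by omega, hnc.1.1, hnc.1.2, fun f hf hf' => hnc.2.2 f (by omega) hf'⟩

lemma nextCol_eq_none {h : ℕ} (hnc : nextCol T c M h = none) :
    ∀ f, h < f → f ≤ M → ¬(0 < c f ∧ T h (c h) ≤ T f (c f)) := by
  simp only [nextCol, List.find?_range'_eq_none, Bool.not_eq_true', decide_eq_false_iff_not]
    at hnc
  exact fun f hf hf' => hnc f (by omega) (by omega)

lemma pathColsAux_eq_cons (fuel h : ℕ) : ∃ t, pathColsAux T c M fuel h = h :: t := by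
  cases fuel with
  | zero => exact ⟨[], rfl⟩
  | succ fuel =>
    cases hnc : nextCol T c M h with
    | none => exact ⟨[], by rw [pathColsAux, hnc]⟩
    | some h' => exact ⟨_, by rw [pathColsAux, hnc]⟩

lemma isChain_pathColsAux (fuel h : ℕ) :
    (pathColsAux T c M fuel h).IsChain fun a b => nextCol T c M a = some b := by
  induction fuel generalizing h with
  | zero => exact List.isChain_singleton _
  | succ fuel ih =>
    cases hnc : nextCol T c M h with
    | none => rw [pathColsAux, hnc]; exact List.isChain_singleton _
    | some h' =>
      obtain ⟨t, ht⟩ := pathColsAux_eq_cons T c M fuel h'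
      have hrest := ih h'
      rw [ht] at hrest
      simp only [pathColsAux, hnc, ht]
      exact List.isChain_cons_cons.2 ⟨hnc, hrest⟩

lemma pairwise_pathColsAux (fuel h : ℕ) :
    (pathColsAux T c M fuel h).Pairwise
      fun a b => a < b ∧ b ≤ M ∧ 0 < c b ∧ T a (c a) ≤ T b (c b) := by
  have : IsTrans ℕ fun a b => a < b ∧ b ≤ M ∧ 0 < c b ∧ T a (c a) ≤ T b (c b) :=
    ⟨fun _ _ _ hab hbd => ⟨hab.1.trans hbd.1, hbd.2.1, hbd.2.2.1, hab.2.2.2.trans hbd.2.2.2⟩⟩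
  refine List.isChain_iff_pairwise.1 ((isChain_pathColsAux T c M fuel h).imp ?_)
  intro a b hab
  obtain ⟨h1, h2, h3, h4, -⟩ := nextCol_eq_some T c M hab
  exact ⟨h1, h2, h3, h4⟩

lemma exists_mem_pathColsAux_le {fuel h x f : ℕ} (hfuel : M - h ≤ fuel)
    (hx : x ∈ pathColsAux T c M fuel h) (hxf : x < f) (hfM : f ≤ M) (hcf : 0 < c f)
    (hv : T x (c x) ≤ T f (c f)) : ∃ y ∈ pathColsAux T c M fuel h, x < y ∧ y ≤ f := by
  induction fuel generalizing h with
  | zero =>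
    rw [pathColsAux, List.mem_singleton] at hx
    omega
  | succ fuel ih =>
    cases hnc : nextCol T c M h with
    | none =>
      rw [pathColsAux, hnc, List.mem_singleton] at hx
      subst hx
      exact absurd ⟨hcf, hv⟩ (nextCol_eq_none T c M hnc f hxf hfM)
    | some h' =>
      obtain ⟨hlt, -, -, -, hmin⟩ := nextCol_eq_some T c M hnc
      obtain ⟨t, ht⟩ := pathColsAux_eq_cons T c M fuel h'
      rw [pathColsAux, hnc] at hx ⊢
      rcases List.mem_cons.1 hx with rfl | hx
      · refine ⟨h', by simp [ht], hlt, ?_⟩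
        by_contra! hfh
        exact hmin f hxf hfh ⟨hcf, hv⟩
      · obtain ⟨y, hy, hxy⟩ := ih (by omega) hx
        exact ⟨y, List.mem_cons_of_mem _ hy, hxy⟩

lemma mem_pathCols_self (j : ℕ) : j ∈ pathCols T c M j := by
  obtain ⟨t, ht⟩ := pathColsAux_eq_cons T c M M j
  simp [pathCols, ht]

lemma mem_pathCols {j x : ℕ} (hx : x ∈ pathCols T c M j) :
    x = j ∨ (j < x ∧ x ≤ M ∧ 0 < c x) := by
  obtain ⟨t, ht⟩ := pathColsAux_eq_cons T c M M j
  have hpw := pairwise_pathColsAux T c M M j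
  rw [pathCols, ht] at hx
  rw [ht] at hpw
  rcases List.mem_cons.1 hx with rfl | hx
  · exact .inl rfl
  · obtain ⟨h1, h2, h3, -⟩ := List.rel_of_pairwise_cons hpw hx
    exact .inr ⟨h1, h2, h3⟩

lemma pathCols_val_mono {j x y : ℕ} (hx : x ∈ pathCols T c M j) (hy : y ∈ pathCols T c M j)
    (hxy : x ≤ y) : T x (c x) ≤ T y (c y) := by
  rcases hxy.eq_or_lt with rfl | hxy
  · exact le_rfl
  · exact ((pairwise_pathColsAux T c M M j).rel_of_lt hx hy hxy).2.2

lemma val_le_getLast_pathCols {j x : ℕ} (hx : x ∈ pathCols T c M j) :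
    T x (c x) ≤ T ((pathCols T c M j).getLastD j) (c ((pathCols T c M j).getLastD j)) := by
  rw [List.getLastD_eq_getLast?, List.getLast?_eq_some_getLast (List.ne_nil_of_mem hx),
    Option.getD_some]
  have hpw : (pathCols T c M j).Pairwise fun a b => T a (c a) ≤ T b (c b) :=
    (pairwise_pathColsAux T c M M j).imp fun h => h.2.2.2
  exact hpw.rel_getLast_of_rel_getLast_getLast hx le_rfl

lemma getLastD_mem_pathCols (j : ℕ) : (pathCols T c M j).getLastD j ∈ pathCols T c M j := by
  have hne := List.ne_nil_of_mem (mem_pathCols_self T c M j)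
  rw [List.getLastD_eq_getLast?, List.getLast?_eq_some_getLast hne, Option.getD_some]
  exact List.getLast_mem hne

lemma exists_mem_pathCols_le {j x f : ℕ} (hx : x ∈ pathCols T c M j) (hxf : x < f)
    (hfM : f ≤ M) (hcf : 0 < c f) (hv : T x (c x) ≤ T f (c f)) :
    ∃ y ∈ pathCols T c M j, x < y ∧ y ≤ f :=
  exists_mem_pathColsAux_le T c M (Nat.sub_le M j) hx hxf hfM hcf hv

end ScanningPath

section Remnant

lemma removePath_le (T : ℕ → ℕ → ℕ) (c : ℕ → ℕ) (M j h : ℕ) : removePath T c M j h ≤ c h := by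
  unfold removePath
  split_ifs <;> omega

lemma removePath_self (T : ℕ → ℕ → ℕ) (c : ℕ → ℕ) (M j : ℕ) :
    removePath T c M j j = c j - 1 :=
  if_pos (mem_pathCols_self T c M j)

lemma remnantIter_antitone (T : ℕ → ℕ → ℕ) (c₀ : ℕ → ℕ) (M j h : ℕ) :
    Antitone fun r => remnantIter T c₀ M j r h :=
  antitone_nat_of_succ_le fun _ => removePath_le ..

lemma remnantIter_self (T : ℕ → ℕ → ℕ) (c₀ : ℕ → ℕ) (M j r : ℕ) :
    remnantIter T c₀ M j r j = c₀ j - r := by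
  induction r with
  | zero => rfl
  | succ r ih =>
    rw [remnantIter, removePath_self, ih]
    omega

variable {lam : NPartition n} {T : ℕ → ℕ → ℕ} {j : ℕ}

lemma remnant_mono (l : ℕ) : Monotone fun i => remnant lam T j i l :=
  fun _ _ h => remnantIter_antitone T _ _ j l (Nat.sub_le_sub_left h _)

lemma remnant_le_zeta (i l : ℕ) : remnant lam T j i l ≤ zeta lam l :=
  remnantIter_antitone T (zeta lam) _ j l (Nat.zero_le _)

lemma remnant_zeta : remnant lam T j (zeta lam j) = zeta lam := by
  rw [remnant, Nat.sub_self]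
  rfl

lemma remnant_self {i : ℕ} (hi : i ≤ zeta lam j) : remnant lam T j i j = i := by
  rw [remnant, remnantIter_self]
  omega

lemma remnant_sub_one {i : ℕ} (hi : 1 ≤ i) (hiz : i ≤ zeta lam j) (l : ℕ) :
    remnant lam T j (i - 1) l =
      if l ∈ scanPath lam T j i then remnant lam T j i l - 1 else remnant lam T j i l := by
  rw [remnant, show zeta lam j - (i - 1) = zeta lam j - i + 1 by omega]
  rfl

/-- Rows of `T` weakly increase, so from a column of the flat stretch the next qualifying column
is always the adjacent one. -/
lemma mem_pathCols_of_flat (hT : IsSSYT lam T) {c : ℕ → ℕ} (hc : c ≤ zeta lam) {x y : ℕ}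
    (hx : x ∈ pathCols T c (lam.part 1) j) (hcx : 0 < c x) (hxy : x ≤ y)
    (hflat : ∀ z, x ≤ z → z ≤ y → c z = c x) : y ∈ pathCols T c (lam.part 1) j := by
  induction y, hxy using Nat.le_induction with
  | base => exact hx
  | succ y hxy ih =>
    have hy := ih fun z hxz hzy => hflat z hxz (by omega)
    have hcy : c y = c x := hflat y hxy (by omega)
    have hcy' : c (y + 1) = c x := hflat (y + 1) (by omega) le_rfl
    have hshape : InShape lam (y + 1) (c x) :=
      (inShape_iff lam (by omega) hcx).2 (hcy' ▸ hc (y + 1))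
    obtain ⟨z, hz, hyz, hzy⟩ := exists_mem_pathCols_le T c _ hy (by omega : y < y + 1)
      (le_part_one_of_inShape lam hshape) (by omega)
      (by rw [hcy, hcy']; exact hT.2.1 y (c x) hshape)
    rwa [show y + 1 = z by omega]

lemma antitoneOn_removePath (hT : IsSSYT lam T) {c : ℕ → ℕ} (hc : c ≤ zeta lam)
    (hanti : AntitoneOn c (Set.Ici j)) :
    AntitoneOn (removePath T c (lam.part 1) j) (Set.Ici j) := by
  intro x hx y hy hxy
  have hcxy := hanti hx hy hxy
  simp only [removePath]
  split_ifs with hyP hxP hxP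
  · omega
  · omega
  · by_contra! hlt
    refine hyP (mem_pathCols_of_flat hT hc hxP (by omega) hxy fun z hxz hzy => ?_)
    have hz : z ∈ Set.Ici j := (Set.mem_Ici.1 hx).trans hxz
    have hzx := hanti hx hz hxz
    have hyz := hanti hz hy hzy
    omega
  · exact hcxy

lemma antitoneOn_remnant (hT : IsSSYT lam T) (i : ℕ) :
    AntitoneOn (remnant lam T j i) (Set.Ici j) := by
  suffices ∀ r, AntitoneOn (remnantIter T (zeta lam) (lam.part 1) j r) (Set.Ici j) from this _
  intro r
  induction r with
  | zero => exact (zeta_antitone lam).antitoneOn _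
  | succ r ih =>
    exact antitoneOn_removePath hT
      (fun h => remnantIter_antitone T (zeta lam) _ j h (Nat.zero_le r)) ih

end Remnant

section PathIndex

variable {lam : NPartition n} {T : ℕ → ℕ → ℕ} {j : ℕ}

lemma exists_inScanPath (hT : IsSSYT lam T) {l k : ℕ} (hjl : j ≤ l) (hk : 1 ≤ k)
    (hkz : k ≤ zeta lam l) : ∃ i, 1 ≤ i ∧ i ≤ zeta lam j ∧ InScanPath lam T j i l k := by
  have hex : ∃ i, k ≤ remnant lam T j i l := ⟨zeta lam j, by rwa [remnant_zeta]⟩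
  have hspec : k ≤ remnant lam T j (Nat.find hex) l := Nat.find_spec hex
  have hiz : Nat.find hex ≤ zeta lam j := Nat.find_min' hex (by rwa [remnant_zeta])
  have hi : 1 ≤ Nat.find hex := by
    by_contra! h0
    have hl0 := antitoneOn_remnant hT (Nat.find hex) (Set.mem_Ici.2 le_rfl) (Set.mem_Ici.2 hjl) hjl
    rw [remnant_self hiz] at hl0
    omega
  have hprev := Nat.find_min hex (show Nat.find hex - 1 < Nat.find hex by omega)
  rw [remnant_sub_one hi hiz] at hprev
  split_ifs at hprev with hmem
  · exact ⟨_, hi, hiz, hmem, by omega⟩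
  · omega

lemma le_remnant_iff {l k i i' : ℕ} (h : InScanPath lam T j i l k) (hk : 1 ≤ k) (hi : 1 ≤ i)
    (hiz : i ≤ zeta lam j) : k ≤ remnant lam T j i' l ↔ i ≤ i' := by
  refine ⟨fun hk' => ?_, fun hii' => h.2.trans_le (remnant_mono l hii')⟩
  by_contra! hi'
  have hprev : remnant lam T j (i - 1) l = k - 1 := by
    rw [remnant_sub_one hi hiz, if_pos h.1, ← h.2]
  have : remnant lam T j i' l ≤ remnant lam T j (i - 1) l := remnant_mono l (by omega)
  omega

lemma inScanPath_unique {l k i i' : ℕ} (h : InScanPath lam T j i l k)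
    (h' : InScanPath lam T j i' l k) (hk : 1 ≤ k) (hi : 1 ≤ i) (hiz : i ≤ zeta lam j)
    (hi' : 1 ≤ i') (hiz' : i' ≤ zeta lam j) : i = i' :=
  le_antisymm ((le_remnant_iff h hk hi hiz).1 h'.2.le)
    ((le_remnant_iff h' hk hi' hiz').1 h.2.le)

lemma sup_filter_inScanPath {l k i : ℕ} (h : InScanPath lam T j i l k) (hk : 1 ≤ k)
    (hi : 1 ≤ i) (hiz : i ≤ zeta lam j) :
    ((Finset.Icc 1 (zeta lam j)).filter fun i => InScanPath lam T j i l k).sup id = i := by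
  have : ((Finset.Icc 1 (zeta lam j)).filter fun i => InScanPath lam T j i l k) = {i} := by
    ext i'
    simp only [Finset.mem_filter, Finset.mem_Icc, Finset.mem_singleton]
    refine ⟨fun ⟨⟨hi', hiz'⟩, h'⟩ => inScanPath_unique h' h hk hi' hiz' hi hiz, ?_⟩
    rintro rfl
    exact ⟨⟨hi, hiz⟩, h⟩
  rw [this, Finset.sup_singleton, id]

lemma aIdx_spec (hT : IsSSYT lam T) {l k : ℕ} (hjl : j < l)
    (hlk : InShape lam l k) :
    1 ≤ aIdx lam T l k j ∧ aIdx lam T l k j ≤ zeta lam j ∧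
      InScanPath lam T j (aIdx lam T l k j) (l - 1) k := by
  have hkz := (inShape_iff lam hlk.1 hlk.2.1).1 hlk
  obtain ⟨a, ha, haz, hpath⟩ := exists_inScanPath hT (show j ≤ l - 1 by omega) hlk.2.1
    (hkz.trans (zeta_antitone lam (Nat.sub_le l 1)))
  rw [aIdx, if_neg hjl.ne, sup_filter_inScanPath hpath hlk.2.1 ha haz]
  exact ⟨ha, haz, hpath⟩

lemma bIdx_spec (hT : IsSSYT lam T) {l k : ℕ} (hjl : j < l)
    (hlk : InShape lam l k) :
    k = zeta lam l ∧ bIdx lam T l k j = zeta lam j + 1 ∨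
      1 ≤ bIdx lam T l k j ∧ bIdx lam T l k j ≤ zeta lam j ∧
        InScanPath lam T j (bIdx lam T l k j) l (k + 1) := by
  by_cases hk : k = zeta lam l
  · exact .inl ⟨hk, by rw [bIdx, if_neg hjl.ne, if_pos hk]⟩
  have hkz := (inShape_iff lam hlk.1 hlk.2.1).1 hlk
  obtain ⟨b, hb, hbz, hpath⟩ := exists_inScanPath hT hjl.le (by omega) (show k + 1 ≤ _ by omega)
  rw [bIdx, if_neg hjl.ne, if_neg hk, sup_filter_inScanPath hpath (by omega) hb hbz]
  exact .inr ⟨hb, hbz, hpath⟩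

lemma aIdx_le_of_inScanPath (hT : IsSSYT lam T) {l k i : ℕ} (hjl : j < l)
    (hlk : InShape lam l k) (h : InScanPath lam T j i l k) : aIdx lam T l k j ≤ i := by
  obtain ⟨ha, haz, hpath⟩ := aIdx_spec hT hjl hlk
  rw [← le_remnant_iff hpath hlk.2.1 ha haz, h.2]
  exact antitoneOn_remnant hT i (Set.mem_Ici.2 (show j ≤ l - 1 by omega))
    (Set.mem_Ici.2 hjl.le) (Nat.sub_le l 1)

lemma lt_bIdx_of_inScanPath (hT : IsSSYT lam T) {l k i : ℕ} (hjl : j < l)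
    (hlk : InShape lam l k) (h : InScanPath lam T j i l k) (hiz : i ≤ zeta lam j) :
    i < bIdx lam T l k j := by
  rcases bIdx_spec hT hjl hlk with ⟨-, hb⟩ | ⟨hb, hbz, hpath⟩
  · omega
  · by_contra! hbi
    have := (le_remnant_iff hpath (by omega) hb hbz).2 hbi
    rw [← h.2] at this
    omega

lemma remnant_eq_of_lt_bIdx (hT : IsSSYT lam T) {l k i i' : ℕ} (hjl : j < l)
    (hlk : InShape lam l k) (h : InScanPath lam T j i l k) (hii' : i ≤ i')
    (hi'b : i' < bIdx lam T l k j) : remnant lam T j i' l = k := by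
  have hlow : k ≤ remnant lam T j i' l := h.2.trans_le (remnant_mono l hii')
  rcases bIdx_spec hT hjl hlk with ⟨hk, -⟩ | ⟨hb, hbz, hpath⟩
  · exact le_antisymm (hk ▸ remnant_le_zeta i' l) hlow
  · have hup : ¬k + 1 ≤ remnant lam T j i' l := fun hk' =>
      absurd ((le_remnant_iff hpath (by omega) hb hbz).1 hk') (by omega)
    omega

end PathIndex

section ScanValue

variable {lam : NPartition n} {T : ℕ → ℕ → ℕ} {j : ℕ}

lemma le_scanValue {l k i : ℕ} (h : InScanPath lam T j i l k) : T l k ≤ scanValue lam T j i := by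
  rw [h.2]
  exact val_le_getLast_pathCols T _ _ h.1

lemma inShape_of_mem_scanPath {i x : ℕ} (hji : InShape lam j i) (hx : x ∈ scanPath lam T j i) :
    InShape lam x (remnant lam T j i x) := by
  have hiz := (inShape_iff lam hji.1 hji.2.1).1 hji
  rcases mem_pathCols T _ _ hx with rfl | ⟨hjx, -, hpos⟩
  · rwa [remnant_self hiz]
  · exact (inShape_iff lam (by omega) hpos).2 (remnant_le_zeta i x)

lemma Epath_le_of_inScanPath {l k i : ℕ} (hjl : j < l) (h : InScanPath lam T j i l k) :
    Epath lam T l k j i ≤ T l k := by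
  obtain ⟨⟨hm, hml⟩, -⟩ := List.isGreatest_foldr_max_filter_lt
    (mem_pathCols_self T (remnant lam T j i) (lam.part 1) j) hjl
  rw [Epath, if_neg hjl.ne, h.2]
  exact pathCols_val_mono T _ _ hm h.1 hml.le

lemma lt_Epath_of_not_mem {l k i : ℕ} (hjl : j < l) (hlk : InShape lam l k)
    (hk : remnant lam T j i l = k) (hnot : l ∉ scanPath lam T j i) :
    T l k < Epath lam T l k j i := by
  obtain ⟨⟨hm, hml⟩, hmax⟩ := List.isGreatest_foldr_max_filter_lt
    (mem_pathCols_self T (remnant lam T j i) (lam.part 1) j) hjl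
  rw [Epath, if_neg hjl.ne]
  by_contra! hle
  obtain ⟨y, hy, hmy, hyl⟩ := exists_mem_pathCols_le T _ _ hm hml (le_part_one_of_inShape lam hlk)
    (hk ▸ hlk.2.1) (hk ▸ hle)
  rcases hyl.eq_or_lt with rfl | hyl
  · exact hnot hy
  · exact absurd (hmax ⟨hy, hyl⟩) (by omega)

end ScanValue

section Window

variable {lam : NPartition n} {T : ℕ → ℕ → ℕ} {j : ℕ}

lemma exists_inScanPath_window (hT : IsSSYT lam T) (hj : 1 ≤ j) {l k : ℕ} (hjl : j ≤ l)
    (hlk : InShape lam l k) :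
    ∃ i, aIdx lam T l k j ≤ i ∧ i + 1 ≤ bIdx lam T l k j ∧ Epath lam T l k j i ≤ T l k ∧
      InShape lam j i ∧ InScanPath lam T j i l k := by
  have hkz := (inShape_iff lam hlk.1 hlk.2.1).1 hlk
  rcases hjl.eq_or_lt with rfl | hjl
  · refine ⟨k, by simp [aIdx], by simp [bIdx], by simpa [Epath] using row_le_of_isSSYT lam hT hlk,
      hlk, mem_pathCols_self T _ _ j, (remnant_self hkz).symm⟩
  · obtain ⟨i, hi, hiz, hpath⟩ := exists_inScanPath hT hjl.le hlk.2.1 hkz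
    exact ⟨i, aIdx_le_of_inScanPath hT hjl hlk hpath, lt_bIdx_of_inScanPath hT hjl hlk hpath hiz,
      Epath_le_of_inScanPath hjl hpath, (inShape_iff lam hj hi).2 hiz, hpath⟩

lemma le_of_mem_window (hT : IsSSYT lam T) {l k i i' : ℕ} (hjl : j ≤ l)
    (hlk : InShape lam l k) (hji : InShape lam j i) (h : InScanPath lam T j i l k)
    (ha : aIdx lam T l k j ≤ i') (hb : i' + 1 ≤ bIdx lam T l k j)
    (hE : Epath lam T l k j i' ≤ T l k) : 1 ≤ i' ∧ i' ≤ i := by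
  have hiz := (inShape_iff lam hji.1 hji.2.1).1 hji
  rcases hjl.eq_or_lt with rfl | hjl
  · simp only [aIdx, bIdx, if_true] at ha hb
    obtain rfl : i' = k := by omega
    exact ⟨hlk.2.1, (h.2.trans (remnant_self hiz)).le⟩
  obtain ⟨ha1, -, -⟩ := aIdx_spec hT hjl hlk
  have hi'z : i' ≤ zeta lam j := by
    rcases bIdx_spec hT hjl hlk with ⟨-, hbz⟩ | ⟨-, hbz, -⟩ <;> omega
  refine ⟨by omega, ?_⟩
  by_contra! hii'
  have hk := remnant_eq_of_lt_bIdx hT hjl hlk h hii'.le (by omega)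
  have hnot : l ∉ scanPath lam T j i' := fun hmem =>
    absurd (inScanPath_unique h ⟨hmem, hk.symm⟩ hlk.2.1 hji.2.1 hiz (by omega) hi'z) hii'.ne
  exact absurd hE (not_le.2 (lt_Epath_of_not_mem hjl hlk hk hnot))

end Window

variable {lam : NPartition n} {T : ℕ → ℕ → ℕ}

lemma mem_Bset_of_scanValue_le_keyTab {p : ℕ → ℕ} (hT : IsSSYT lam T)
    (hle : ∀ j i, InShape lam j i → scanValue lam T j i ≤ keyTab lam p j i) {l k : ℕ}
    (hlk : InShape lam l k) : T l k ∈ Bset lam T p l k := by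
  intro j hj hjl
  obtain ⟨i, ha, hb, hE, hji, hpath⟩ := exists_inScanPath_window hT hj hjl hlk
  exact ⟨i, ha, hb, hE, (le_scanValue hpath).trans (hle j i hji)⟩

lemma scanValue_le_keyTab_of_mem_Bset {p : ℕ → ℕ} (hp : IsNPerm n p) (hT : IsSSYT lam T)
    (hB : ∀ l k, InShape lam l k → T l k ∈ Bset lam T p l k) {j i : ℕ} (hji : InShape lam j i) :
    scanValue lam T j i ≤ keyTab lam p j i := by
  set L := (scanPath lam T j i).getLastD j
  have hL : L ∈ scanPath lam T j i := getLastD_mem_pathCols T _ _ j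
  have hjL : j ≤ L := by rcases mem_pathCols T _ _ hL with h | h <;> omega
  have hLshape := inShape_of_mem_scanPath hji hL
  obtain ⟨i', ha, hb, hE, hkey⟩ := hB L _ hLshape j hji.1 hjL
  obtain ⟨hi', hi'i⟩ := le_of_mem_window hT hjL hLshape hji ⟨hL, rfl⟩ ha hb hE
  exact hkey.trans (keyTab_mono lam hp hji.1 hi' hi'i ((inShape_iff lam hji.1 hji.2.1).1 hji))

theorem scan_le_key_iff_Bset_general (n : ℕ) (lam : NPartition n)
    (p : ℕ → ℕ) (hp : IsNPerm n p) (T : ℕ → ℕ → ℕ) (hT : IsSSYT lam T) :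
    (∀ j i, InShape lam j i → scanValue lam T j i ≤ keyTab lam p j i) ↔
      (∀ l k, InShape lam l k → T l k ∈ Bset lam T p l k) :=
  ⟨fun hle _ _ => mem_Bset_of_scanValue_le_keyTab hT hle,
    fun hB _ _ => scanValue_le_keyTab_of_mem_Bset hp hT hB⟩

/-- Theorem 8.1.  `S(T) ≤ Y_λ(π)` iff every entry of `T`
lies in the corresponding southwestern set `B_λ(T, π; l, k)`. -/
theorem scan_le_key_iff_Bset (n : ℕ) (hn : 1 ≤ n) (lam : NPartition n)
    (p : ℕ → ℕ) (hp : IsNPerm n p) (T : ℕ → ℕ → ℕ) (hT : IsSSYT lam T) :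
    (∀ j i, InShape lam j i → scanValue lam T j i ≤ keyTab lam p j i) ↔
      (∀ l k, InShape lam l k → T l k ∈ Bset lam T p l k) :=
  scan_le_key_iff_Bset_general n lam p hp T hT

end KeyPoly
end
end
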